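/- Let T0 and T1 be two balanced trees with T0 ≼ T1 in the Tamari order. Then any two sequences of right rotations transforming T0 into T1 (i.e., any two chains T0 = U_0 ⋌ U_1 ⋌ … ⋌ U_m = T1) have the same length m; moreover the set of infix positions of the rotation roots used is the same for both sequences, each position occurring exactly once. -/

import Mathlib

/-!
Right rotations never lead from an unbalanced tree back to a balanced one: a node
whose balanced left subtree is two levels lower than its right subtree, measured
by a height bound that rotations cannot decrease, survives every later rotation.
So every tree of a chain between balanced trees is balanced. A rotation at infix
rank `k` shrinks the left subtree of the node of rank `k` and no other left
subtree, so the ranks used are exactly those where the left subtree sizes of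
`T1` are smaller than those of `T0`. Between balanced trees, a rotation root goes
from imbalance `-1` to imbalance `≥ 0`, and no imbalance ever decreases, so no
rank is used twice; the length of a chain is therefore the number of these ranks.
-/

/-- Complete rooted planar binary trees. -/
inductive BTree where
  | leaf : BTree
  | node : BTree → BTree → BTree
  deriving DecidableEq

namespace BTree

/-- The height of a tree. -/
def ht : BTree → ℕ
  | leaf => 0
  | node l r => 1 + max l.ht r.ht

/-- The imbalance value of the root of a tree (`γ`). -/
def imb : BTree → ℤ
  | leaf => 0
  | node l r => (r.ht : ℤ) - l.ht

/-- A tree is balanced if every node has imbalance value in {-1, 0, 1}. -/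
def Balanced : BTree → Prop
  | leaf => True
  | node l r =>
      ((r.ht : ℤ) - l.ht = -1 ∨ (r.ht : ℤ) - l.ht = 0 ∨ (r.ht : ℤ) - l.ht = 1) ∧
      Balanced l ∧ Balanced r

/-- The subtree at a position (`false` = go left, `true` = go right). -/
def subtreeAt : BTree → List Bool → Option BTree
  | t, [] => some t
  | leaf, _ :: _ => none
  | node l _, false :: p => subtreeAt l p
  | node _ r, true :: p => subtreeAt r p

/-- `p` is the position of an internal node of `t`. -/
def IsNodePos (t : BTree) (p : List Bool) : Prop :=
  ∃ l r, subtreeAt t p = some (node l r)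

/-- Right rotation whose root `y` is at position `p`: the subtree
`(A ∧ B) ∧ C` at `p` is replaced by `A ∧ (B ∧ C)`. -/
inductive RotAt : BTree → List Bool → BTree → Prop
  | here (a b c : BTree) : RotAt (node (node a b) c) [] (node a (node b c))
  | left {l l' : BTree} (r : BTree) {p : List Bool} :
      RotAt l p l' → RotAt (node l r) (false :: p) (node l' r)
  | right (l : BTree) {r r' : BTree} {p : List Bool} :
      RotAt r p r' → RotAt (node l r) (true :: p) (node l r')

/-- `t₁` is obtained from `t₀` by a single right rotation (`t₀ ⋌ t₁`). -/
def Rot (t₀ t₁ : BTree) : Prop := ∃ p, RotAt t₀ p t₁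

/-- The Tamari order: reflexive transitive closure of right rotation. -/
def Tamari : BTree → BTree → Prop := Relation.ReflTransGen Rot

/-- Number of internal nodes. -/
def size : BTree → ℕ
  | leaf => 0
  | node l r => l.size + r.size + 1

/-- The infix position (rank in the infix traversal, starting from 0) of the
node at position `p` in `t`. -/
def infixRank : BTree → List Bool → ℕ
  | node l _, [] => l.size
  | node l _, false :: p => infixRank l p
  | node l r, true :: p => l.size + 1 + infixRank r p
  | leaf, _ => 0

lemma balanced_node_iff {l r : BTree} :
    Balanced (node l r) ↔
      Balanced l ∧ Balanced r ∧ l.ht ≤ r.ht + 1 ∧ r.ht ≤ l.ht + 1 := by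
  show (_ ∧ _ ∧ _) ↔ _
  constructor
  · rintro ⟨h, hl, hr⟩
    exact ⟨hl, hr, by omega, by omega⟩
  · rintro ⟨hl, hr, h₁, h₂⟩
    exact ⟨by omega, hl, hr⟩

lemma RotAt.size_eq {t u : BTree} {p : List Bool} (h : RotAt t p u) : u.size = t.size := by
  induction h <;> simp only [size] <;> omega

lemma RotAt.infixRank_lt_size {t u : BTree} {p : List Bool} (h : RotAt t p u) :
    infixRank t p < t.size := by
  induction h <;> simp only [infixRank, size] <;> omega

lemma RotAt.ht_eq_of_balanced {t u : BTree} {p : List Bool} (h : RotAt t p u)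
    (htb : Balanced t) (hub : Balanced u) : u.ht = t.ht := by
  induction h with
  | here a b c =>
      simp only [balanced_node_iff, BTree.ht] at htb hub ⊢
      omega
  | left r _ ih =>
      rw [balanced_node_iff] at htb hub
      simp only [BTree.ht, ih htb.1 hub.1]
  | right l _ ih =>
      rw [balanced_node_iff] at htb hub
      simp only [BTree.ht, ih htb.2.1 hub.2.1]

/-- A lower bound for the height that no right rotation can decrease: the edge
to a left child, which a rotation above it may remove, only counts when the
right child is at most one level lower. -/
def stableHt : BTree → ℕ
  | leaf => 0
  | node l r => max (max l.stableHt (r.stableHt + 1)) (min (l.stableHt + 1) (r.stableHt + 2))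

lemma stableHt_le_ht (t : BTree) : t.stableHt ≤ t.ht := by
  induction t with
  | leaf => simp [stableHt, BTree.ht]
  | node l r ihl ihr => simp only [stableHt, BTree.ht]; omega

lemma Balanced.stableHt_eq {t : BTree} (h : Balanced t) : t.stableHt = t.ht := by
  induction t with
  | leaf => simp [stableHt, BTree.ht]
  | node l r ihl ihr =>
      rw [balanced_node_iff] at h
      have := ihl h.1
      have := ihr h.2.1
      simp only [stableHt, BTree.ht]
      omega

lemma RotAt.stableHt_le {t u : BTree} {p : List Bool} (h : RotAt t p u) :
    t.stableHt ≤ u.stableHt := by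
  induction h <;> simp only [stableHt] at * <;> omega

/-- A node whose left subtree is balanced and whose right subtree is, in a
rotation-stable way, at least two levels higher: it rules out balance, and
right rotations never get rid of it. -/
def HasSteepNode : BTree → Prop
  | leaf => False
  | node l r => (Balanced l ∧ l.ht + 2 ≤ r.stableHt) ∨ HasSteepNode l ∨ HasSteepNode r

lemma HasSteepNode.not_balanced {t : BTree} (hs : HasSteepNode t) : ¬ Balanced t := by
  induction t with
  | leaf => exact hs.elim
  | node l r ihl ihr =>
      rw [balanced_node_iff]
      rintro ⟨hl, hr, -, hlr⟩
      rcases hs with ⟨-, hsteep⟩ | hs | hs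
      · have := stableHt_le_ht r
        omega
      · exact ihl hs hl
      · exact ihr hs hr

lemma RotAt.hasSteepNode_of_not_balanced {t u : BTree} {p : List Bool} (h : RotAt t p u)
    (hbt : Balanced t) (hbu : ¬ Balanced u) : HasSteepNode u := by
  induction h with
  | here a b c =>
      simp only [balanced_node_iff] at hbt hbu
      obtain ⟨⟨ha, hb, hab, hba⟩, hc, habc, hcab⟩ := hbt
      have hsc := hc.stableHt_eq
      simp only [BTree.ht] at habc hcab
      by_cases hbc : b.ht + 2 ≤ c.ht
      · exact Or.inr (Or.inr (Or.inl ⟨hb, hsc ▸ hbc⟩))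
      · refine Or.inl ⟨ha, ?_⟩
        have hac : a.ht + 1 ≤ c.ht := by
          by_contra hac
          exact hbu ⟨ha, ⟨hb, hc, by omega, by omega⟩, by simp only [BTree.ht]; omega,
            by simp only [BTree.ht]; omega⟩
        simp only [stableHt]
        omega
  | @left l l' r _ h ih =>
      rw [balanced_node_iff] at hbt hbu
      by_cases hbl' : Balanced l'
      · have := h.ht_eq_of_balanced hbt.1 hbl'
        exact absurd ⟨hbl', hbt.2.1, by omega, by omega⟩ hbu
      · exact Or.inr (Or.inl (ih hbt.1 hbl'))
  | @right l r r' _ h ih =>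
      rw [balanced_node_iff] at hbt hbu
      by_cases hbr' : Balanced r'
      · have := h.ht_eq_of_balanced hbt.2.1 hbr'
        exact absurd ⟨hbt.1, hbr', by omega, by omega⟩ hbu
      · exact Or.inr (Or.inr (ih hbt.2.1 hbr'))

lemma RotAt.hasSteepNode {t u : BTree} {p : List Bool} (h : RotAt t p u)
    (hs : HasSteepNode t) : HasSteepNode u := by
  induction h with
  | here a b c =>
      rcases hs with ⟨hab, hsteep⟩ | (⟨ha, hsteep⟩ | hs | hs) | hs
      · rw [balanced_node_iff] at hab
        refine Or.inr (Or.inr (Or.inl ⟨hab.2.1, ?_⟩))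
        simp only [BTree.ht] at hsteep
        omega
      · refine Or.inl ⟨ha, ?_⟩
        simp only [stableHt]
        omega
      · exact Or.inr (Or.inl hs)
      · exact Or.inr (Or.inr (Or.inr (Or.inl hs)))
      · exact Or.inr (Or.inr (Or.inr (Or.inr hs)))
  | @left l l' r _ h ih =>
      rcases hs with ⟨hl, hsteep⟩ | hs | hs
      · by_cases hl' : Balanced l'
        · exact Or.inl ⟨hl', h.ht_eq_of_balanced hl hl' ▸ hsteep⟩
        · exact Or.inr (Or.inl (h.hasSteepNode_of_not_balanced hl hl'))
      · exact Or.inr (Or.inl (ih hs))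
      · exact Or.inr (Or.inr hs)
  | right l h ih =>
      rcases hs with ⟨hl, hsteep⟩ | hs | hs
      · exact Or.inl ⟨hl, hsteep.trans h.stableHt_le⟩
      · exact Or.inr (Or.inl hs)
      · exact Or.inr (Or.inr (ih hs))

section AtRank

variable {α : Type*} [Zero α] (f : BTree → BTree → α)

/-- The value of `f` on the two subtrees of the node of infix rank `k`
(`0` when `k` is out of range). -/
def atRank : BTree → ℕ → α
  | leaf, _ => 0
  | node l r, k =>
      if k < l.size then atRank l k
      else if k = l.size then f l r
      else atRank r (k - l.size - 1)

variable {f}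

lemma atRank_node_of_lt {l r : BTree} {k : ℕ} (h : k < l.size) :
    atRank f (node l r) k = atRank f l k := by
  simp [atRank, h]

lemma atRank_node_size (l r : BTree) : atRank f (node l r) l.size = f l r := by
  simp [atRank]

lemma atRank_node_of_gt {l r : BTree} {k : ℕ} (h : l.size < k) :
    atRank f (node l r) k = atRank f r (k - l.size - 1) := by
  simp [atRank, show ¬ k < l.size by omega, show k ≠ l.size by omega]

lemma atRank_rotate_of_ne (a b c : BTree) {k : ℕ} (hx : k ≠ a.size)
    (hy : k ≠ a.size + b.size + 1) :
    atRank f (node a (node b c)) k = atRank f (node (node a b) c) k := by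
  have hab : (node a b).size = a.size + b.size + 1 := rfl
  rcases lt_or_gt_of_ne hx with hk | hk
  · rw [atRank_node_of_lt hk, atRank_node_of_lt (by omega), atRank_node_of_lt hk]
  rcases lt_or_gt_of_ne hy with hk' | hk'
  · rw [atRank_node_of_gt hk, atRank_node_of_lt (by omega), atRank_node_of_lt (by omega),
      atRank_node_of_gt hk]
  · rw [atRank_node_of_gt hk, atRank_node_of_gt (by omega), atRank_node_of_gt (by omega), hab]
    congr 1
    omega

lemma atRank_node_node_size (a b c : BTree) :
    atRank f (node (node a b) c) (a.size + b.size + 1) = f (node a b) c :=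
  atRank_node_size _ _

lemma atRank_node_right_node (a b c : BTree) :
    atRank f (node a (node b c)) (a.size + b.size + 1) = f b c := by
  rw [atRank_node_of_gt (by omega), show a.size + b.size + 1 - a.size - 1 = b.size by omega,
    atRank_node_size]

lemma atRank_node_left_node (a b c : BTree) :
    atRank f (node (node a b) c) a.size = f a b := by
  rw [atRank_node_of_lt (by simp only [size]; omega), atRank_node_size]

end AtRank

def leftSize : BTree → ℕ → ℕ := atRank fun l _ => l.size

def imbAt : BTree → ℕ → ℤ := atRank fun l r => imb (node l r)

lemma RotAt.leftSize {t u : BTree} {p : List Bool} (h : RotAt t p u) :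
    u.leftSize (infixRank t p) < t.leftSize (infixRank t p) ∧
      ∀ k ≠ infixRank t p, u.leftSize k = t.leftSize k := by
  unfold BTree.leftSize
  induction h with
  | here a b c =>
      refine ⟨?_, fun k hk => ?_⟩
      · show _ < atRank _ _ (node a b).size
        rw [atRank_node_size]
        simp only [infixRank, size, atRank_node_right_node]
        omega
      · by_cases hx : k = a.size
        · subst hx
          rw [atRank_node_size, atRank_node_left_node]
        · exact atRank_rotate_of_ne a b c hx hk
  | @left l l' r p h ih =>
      have hsz := h.size_eq
      have hlt := h.infixRank_lt_size
      refine ⟨?_, fun k hk => ?_⟩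
      · simpa only [infixRank, atRank_node_of_lt hlt, atRank_node_of_lt (hsz ▸ hlt)] using ih.1
      · simp only [atRank, hsz]
        split_ifs
        · exact ih.2 k hk
        · rfl
        · rfl
  | @right l r r' p h ih =>
      have hrank : l.size < l.size + 1 + infixRank r p := by omega
      have hsub : l.size + 1 + infixRank r p - l.size - 1 = infixRank r p := by omega
      refine ⟨?_, fun k hk => ?_⟩
      · simpa only [infixRank, atRank_node_of_gt hrank, hsub] using ih.1
      · simp only [atRank]
        split_ifs
        · rfl
        · rfl
        · exact ih.2 _ (by simp only [infixRank] at hk; omega)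

lemma imb_node (l r : BTree) : imb (node l r) = (r.ht : ℤ) - l.ht := rfl

lemma RotAt.imbAt_of_balanced {t u : BTree} {p : List Bool} (h : RotAt t p u)
    (hbt : Balanced t) (hbu : Balanced u) :
    t.imbAt (infixRank t p) = -1 ∧ 0 ≤ u.imbAt (infixRank t p) ∧
      ∀ k, t.imbAt k ≤ u.imbAt k := by
  unfold BTree.imbAt
  induction h with
  | here a b c =>
      have hht := (RotAt.here a b c).ht_eq_of_balanced hbt hbu
      simp only [balanced_node_iff, BTree.ht] at hbt hbu hht
      have hy : infixRank (node (node a b) c) [] = a.size + b.size + 1 := rfl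
      refine ⟨?_, ?_, fun k => ?_⟩
      · rw [hy, atRank_node_node_size]
        simp only [imb_node, BTree.ht]
        omega
      · simp only [hy, atRank_node_right_node, imb_node]
        omega
      · by_cases hx : k = a.size
        · subst hx
          simp only [atRank_node_left_node, atRank_node_size, imb_node, BTree.ht]
          omega
        by_cases hk : k = a.size + b.size + 1
        · subst hk
          rw [atRank_node_right_node, atRank_node_node_size]
          simp only [imb_node, BTree.ht]
          omega
        · exact (atRank_rotate_of_ne a b c hx hk).ge
  | @left l l' r p h ih =>
      rw [balanced_node_iff] at hbt hbu
      have hht := h.ht_eq_of_balanced hbt.1 hbu.1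
      have hsz := h.size_eq
      have hlt := h.infixRank_lt_size
      obtain ⟨ih₁, ih₂, ih₃⟩ := ih hbt.1 hbu.1
      refine ⟨?_, ?_, fun k => ?_⟩
      · simpa only [infixRank, atRank_node_of_lt hlt] using ih₁
      · simpa only [infixRank, atRank_node_of_lt (hsz ▸ hlt)] using ih₂
      · simp only [atRank, hsz, imb_node, hht]
        split_ifs
        · exact ih₃ k
        · rfl
        · rfl
  | @right l r r' p h ih =>
      rw [balanced_node_iff] at hbt hbu
      have hht := h.ht_eq_of_balanced hbt.2.1 hbu.2.1
      have hrank : l.size < l.size + 1 + infixRank r p := by omega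
      have hsub : l.size + 1 + infixRank r p - l.size - 1 = infixRank r p := by omega
      obtain ⟨ih₁, ih₂, ih₃⟩ := ih hbt.2.1 hbu.2.1
      refine ⟨?_, ?_, fun k => ?_⟩
      · simpa only [infixRank, atRank_node_of_gt hrank, hsub] using ih₁
      · simpa only [infixRank, atRank_node_of_gt hrank, hsub] using ih₂
      · simp only [atRank, imb_node, hht]
        split_ifs
        · rfl
        · rfl
        · exact ih₃ _

lemma rel_of_forall_lt_rel_succ {β : Type*} (r : β → β → Prop) [Std.Refl r] [IsTrans β r]
    {g : ℕ → β} {m : ℕ} (h : ∀ i < m, r (g i) (g (i + 1))) {a b : ℕ} (hab : a ≤ b)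
    (hbm : b ≤ m) : r (g a) (g b) := by
  induction b, hab using Nat.le_induction with
  | base => exact refl _
  | succ n _ ih => exact _root_.trans (ih (by omega)) (h n (by omega))

section Chain

variable {m : ℕ} {U : ℕ → BTree} {p : ℕ → List Bool}

/-- Balanced trees form a convex subset of the Tamari order. -/
lemma balanced_of_chain (hU : ∀ i < m, RotAt (U i) (p i) (U (i + 1)))
    (h0 : Balanced (U 0)) (hm : Balanced (U m)) {i : ℕ} (hi : i ≤ m) : Balanced (U i) := by
  induction i with
  | zero => exact h0
  | succ n ih =>
      by_contra hn
      have hsteep := (hU n (by omega)).hasSteepNode_of_not_balanced (ih (by omega)) hn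
      exact (rel_of_forall_lt_rel_succ (β := Prop) (· ≤ ·) (g := fun i => HasSteepNode (U i))
        (fun i hi => (hU i hi).hasSteepNode) hi le_rfl hsteep).not_balanced hm

def rotationRanks (U : ℕ → BTree) (p : ℕ → List Bool) (m : ℕ) : List ℕ :=
  (List.range m).map fun i => infixRank (U i) (p i)

lemma mem_rotationRanks_iff (hU : ∀ i < m, RotAt (U i) (p i) (U (i + 1))) (k : ℕ) :
    k ∈ rotationRanks U p m ↔ (U m).leftSize k < (U 0).leftSize k := by
  have hanti : ∀ {a b}, a ≤ b → b ≤ m → (U b).leftSize k ≤ (U a).leftSize k :=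
    rel_of_forall_lt_rel_succ (· ≥ ·) (g := fun i => (U i).leftSize k) fun i hi => by
      rcases eq_or_ne k (infixRank (U i) (p i)) with rfl | hk
      · exact ((hU i hi).leftSize.1).le
      · exact ((hU i hi).leftSize.2 k hk).le
  simp only [rotationRanks, List.mem_map, List.mem_range]
  constructor
  · rintro ⟨i, hi, rfl⟩
    calc (U m).leftSize (infixRank (U i) (p i))
        ≤ (U (i + 1)).leftSize (infixRank (U i) (p i)) := hanti (by omega) le_rfl
      _ < (U i).leftSize (infixRank (U i) (p i)) := (hU i hi).leftSize.1
      _ ≤ (U 0).leftSize (infixRank (U i) (p i)) := hanti (by omega) hi.le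
  · intro hlt
    by_contra! hk
    have hconst : ∀ i < m, (U i).leftSize k = (U (i + 1)).leftSize k :=
      fun i hi => ((hU i hi).leftSize.2 k fun h => hk i hi h.symm).symm
    exact hlt.ne (rel_of_forall_lt_rel_succ (· = ·) (g := fun i => (U i).leftSize k) hconst
      (Nat.zero_le m) le_rfl).symm

lemma nodup_rotationRanks (hU : ∀ i < m, RotAt (U i) (p i) (U (i + 1)))
    (hb : ∀ i ≤ m, Balanced (U i)) : (rotationRanks U p m).Nodup := by
  have hrot (i : ℕ) (hi : i < m) := (hU i hi).imbAt_of_balanced (hb i hi.le) (hb (i + 1) hi)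
  have hmono : ∀ {a b}, a ≤ b → b ≤ m → ∀ k, (U a).imbAt k ≤ (U b).imbAt k :=
    fun hab hbm k => rel_of_forall_lt_rel_succ (· ≤ ·) (g := fun i => (U i).imbAt k)
      (fun i hi => (hrot i hi).2.2 k) hab hbm
  have hne : ∀ {i j}, i < j → j < m → infixRank (U i) (p i) ≠ infixRank (U j) (p j) := by
    intro i j hij hj heq
    have h₁ := (hrot i (by omega)).2.1
    have h₂ := hmono (a := i + 1) hij hj.le (infixRank (U i) (p i))
    have h₃ := (hrot j hj).1
    rw [heq] at h₁ h₂
    omega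
  refine List.nodup_range.map_on fun i hi j hj hij => ?_
  rw [List.mem_range] at hi hj
  rcases lt_trichotomy i j with h | h | h
  · exact absurd hij (hne h hj)
  · exact h
  · exact absurd hij.symm (hne h hi)

lemma length_rotationRanks (U : ℕ → BTree) (p : ℕ → List Bool) (m : ℕ) :
    (rotationRanks U p m).length = m := by
  simp [rotationRanks]

end Chain

/-- Between two balanced trees `T0 ≼ T1`, any two chains of right rotations from
`T0` to `T1` have the same length, the rotation roots of a chain occupy pairwise
distinct infix positions, and both chains use the same set of infix positions. -/
theorem rotation_chains_same_roots (T0 T1 : BTree)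
    (h0 : Balanced T0) (h1 : Balanced T1)
    (m m' : ℕ) (U V : ℕ → BTree) (p q : ℕ → List Bool)
    (hU0 : U 0 = T0) (hUm : U m = T1)
    (hV0 : V 0 = T0) (hVm : V m' = T1)
    (hU : ∀ i < m, RotAt (U i) (p i) (U (i + 1)))
    (hV : ∀ i < m', RotAt (V i) (q i) (V (i + 1))) :
    m = m' ∧
    ((List.range m).map fun i => infixRank (U i) (p i)).Nodup ∧
    ((List.range m).map fun i => infixRank (U i) (p i)).toFinset =
      ((List.range m').map fun i => infixRank (V i) (q i)).toFinset := by
  change m = m' ∧ (rotationRanks U p m).Nodup ∧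
    (rotationRanks U p m).toFinset = (rotationRanks V q m').toFinset
  have hnodupU := nodup_rotationRanks hU fun i hi =>
    balanced_of_chain hU (hU0 ▸ h0) (hUm ▸ h1) hi
  have hnodupV := nodup_rotationRanks hV fun i hi =>
    balanced_of_chain hV (hV0 ▸ h0) (hVm ▸ h1) hi
  have hsame : (rotationRanks U p m).toFinset = (rotationRanks V q m').toFinset := by
    ext k
    simp only [List.mem_toFinset, mem_rotationRanks_iff hU, mem_rotationRanks_iff hV,
      hU0, hUm, hV0, hVm]
  refine ⟨?_, hnodupU, hsame⟩
  calc m = (rotationRanks U p m).toFinset.card := by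
        rw [List.toFinset_card_of_nodup hnodupU, length_rotationRanks]
    _ = (rotationRanks V q m').toFinset.card := by rw [hsame]
    _ = m' := by rw [List.toFinset_card_of_nodup hnodupV, length_rotationRanks]

end BTree
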